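/- Let M : X → R be a randomized algorithm on finite sets that is (ε,δ)-differentially private as a function of a single input, i.e., for all x, x' ∈ X and events C ⊆ R, Pr[M(x) ∈ C] ≤ e^ε · Pr[M(x') ∈ C] + δ. Then there exists a randomized algorithm M' : X → R that is (2ε, 0)-differentially private and satisfies dTV(M(x), M'(x)) ≤ δ for every x ∈ X. -/
import Mathlib


open Finset

def IsDist {α : Type*} [Fintype α] (p : α → ℝ) : Prop :=
  (∀ x, 0 ≤ p x) ∧ ∑ x, p x = 1

noncomputable def dTV {α : Type*} [Fintype α] (p q : α → ℝ) : ℝ :=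
  (1 / 2) * ∑ x, |p x - q x|

/-- `(ε,δ)`-differential privacy for a single-input randomized algorithm `M`
(identified with the family of output distributions `{M x}`):
`Pr[M(x) ∈ C] ≤ e^ε·Pr[M(x') ∈ C] + δ` for all `x, x'` and events `C`. -/
def IsDP {X R : Type*} [Fintype X] [Fintype R] (M : X → R → ℝ) (ε δ : ℝ) : Prop :=
  ∀ x x' : X, ∀ C : Finset R, ∑ r ∈ C, M x r ≤ Real.exp ε * ∑ r ∈ C, M x' r + δ

lemma aux_clamp {R : Type*} [Fintype R] (ε δ : ℝ) (hε : 0 ≤ ε) (hδ0 : 0 ≤ δ)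
    (p q : R → ℝ) (hp : IsDist p) (hq : IsDist q)
    (h1 : ∀ C : Finset R, ∑ r ∈ C, p r ≤ Real.exp ε * ∑ r ∈ C, q r + δ)
    (h2 : ∀ C : Finset R, ∑ r ∈ C, q r ≤ Real.exp ε * ∑ r ∈ C, p r + δ) :
    ∃ p' : R → ℝ, (∀ r, Real.exp (-ε) * q r ≤ p' r ∧ p' r ≤ Real.exp ε * q r) ∧
      (∑ r, p' r = 1) ∧ ∑ r, |p r - p' r| ≤ 2 * δ := by
  set lo : R → ℝ := fun r => Real.exp (-ε) * q r with hlo_def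
  set hi : R → ℝ := fun r => Real.exp ε * q r with hhi_def
  have hlohi : ∀ r, lo r ≤ hi r := fun r =>
    mul_le_mul_of_nonneg_right (Real.exp_le_exp.2 (by linarith)) (hq.1 r)
  set b : R → ℝ := fun r => min (max (p r) (lo r)) (hi r) with hb_def
  have hblo : ∀ r, lo r ≤ b r := fun r => le_min (le_max_right _ _) (hlohi r)
  have hbhi : ∀ r, b r ≤ hi r := fun r => min_le_right _ _
  set t := ∑ r, b r with ht_def
  set A := ∑ r, max (p r - b r) 0 with hA_def
  set B := ∑ r, max (b r - p r) 0 with hB_def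
  have hsum_hi : ∑ r, hi r = Real.exp ε := by
    simp only [hhi_def, ← Finset.mul_sum, hq.2, mul_one]
  have hsum_lo : ∑ r, lo r = Real.exp (-ε) := by
    simp only [hlo_def, ← Finset.mul_sum, hq.2, mul_one]
  -- pointwise identification of the positive/negative parts
  have hA_pt : ∀ r, max (p r - b r) 0 = max (p r - hi r) 0 := by
    intro r
    rcases le_total (p r) (hi r) with h | h
    · have hb : p r ≤ b r := le_min (le_max_left _ _) h
      rw [max_eq_right (by linarith), max_eq_right (by linarith)]
    · have hb : b r = hi r := by
        simp only [hb_def]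
        rw [max_eq_left (le_trans (hlohi r) h), min_eq_right h]
      rw [hb]
  have hB_pt : ∀ r, max (b r - p r) 0 = max (lo r - p r) 0 := by
    intro r
    rcases le_total (lo r) (p r) with h | h
    · have hb : b r ≤ p r := by
        simp only [hb_def]
        rw [max_eq_left h]
        exact min_le_left _ _
      rw [max_eq_right (by linarith), max_eq_right (by linarith)]
    · have hb : b r = lo r := by
        simp only [hb_def]
        rw [max_eq_right h, min_eq_left (hlohi r)]
      rw [hb]
  -- A ≤ δ
  have hA : A ≤ δ := by
    set C := Finset.univ.filter fun r => hi r < p r with hC_def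
    have e1 : A = ∑ r ∈ C, (p r - hi r) := by
      rw [hA_def, hC_def, Finset.sum_filter]
      refine Finset.sum_congr rfl fun r _ => ?_
      rw [hA_pt r]
      split_ifs with h
      · exact max_eq_left (by linarith)
      · exact max_eq_right (by linarith)
    have e2 : ∑ r ∈ C, (p r - hi r) = ∑ r ∈ C, p r - Real.exp ε * ∑ r ∈ C, q r := by
      rw [Finset.sum_sub_distrib, Finset.mul_sum]
    have := h1 C
    linarith [e1, e2]
  -- B ≤ δ
  have hB : B ≤ δ := by
    set D := Finset.univ.filter fun r => p r < lo r with hD_def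
    have e1 : B = ∑ r ∈ D, (lo r - p r) := by
      rw [hB_def, hD_def, Finset.sum_filter]
      refine Finset.sum_congr rfl fun r _ => ?_
      rw [hB_pt r]
      split_ifs with h
      · exact max_eq_left (by linarith)
      · exact max_eq_right (by linarith)
    have e2 : ∑ r ∈ D, (lo r - p r) = Real.exp (-ε) * ∑ r ∈ D, q r - ∑ r ∈ D, p r := by
      rw [Finset.sum_sub_distrib, Finset.mul_sum]
    have hee : Real.exp (-ε) * Real.exp ε = 1 := by
      rw [← Real.exp_add]; simp
    have h3 : Real.exp (-ε) * ∑ r ∈ D, q r ≤ ∑ r ∈ D, p r + Real.exp (-ε) * δ := by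
      calc Real.exp (-ε) * ∑ r ∈ D, q r
          ≤ Real.exp (-ε) * (Real.exp ε * ∑ r ∈ D, p r + δ) :=
            mul_le_mul_of_nonneg_left (h2 D) (Real.exp_nonneg _)
        _ = ∑ r ∈ D, p r + Real.exp (-ε) * δ := by rw [mul_add, ← mul_assoc, hee, one_mul]
    have h4 : Real.exp (-ε) * δ ≤ δ :=
      mul_le_of_le_one_left hδ0 (Real.exp_le_one_iff.2 (by linarith))
    linarith [e1, e2]
  -- |p - b| = A-part + B-part ; t - 1 = B - A
  have habs : ∀ r, |p r - b r| = max (p r - b r) 0 + max (b r - p r) 0 := by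
    intro r
    rcases le_total (p r) (b r) with h | h
    · rw [abs_of_nonpos (by linarith), max_eq_right (by linarith),
        max_eq_left (by linarith)]; ring
    · rw [abs_of_nonneg (by linarith), max_eq_left (by linarith),
        max_eq_right (by linarith)]; ring
  have hABsum : ∑ r, |p r - b r| = A + B := by
    rw [hA_def, hB_def, ← Finset.sum_add_distrib]
    exact Finset.sum_congr rfl fun r _ => habs r
  have hBA : B - A = t - 1 := by
    have e : ∀ r, max (b r - p r) 0 - max (p r - b r) 0 = b r - p r := by
      intro r
      rcases le_total (p r) (b r) with h | h
      · rw [max_eq_left (by linarith), max_eq_right (by linarith)]; ring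
      · rw [max_eq_right (by linarith), max_eq_left (by linarith)]; ring
    calc B - A = ∑ r, (max (b r - p r) 0 - max (p r - b r) 0) := by
          rw [Finset.sum_sub_distrib]
      _ = ∑ r, (b r - p r) := Finset.sum_congr rfl fun r _ => e r
      _ = t - 1 := by rw [Finset.sum_sub_distrib, hp.2]
  rcases lt_trichotomy t 1 with ht | ht | ht
  · -- t < 1 : mix b with hi
    have hden : 0 < Real.exp ε - t := by
      have := Real.one_le_exp hε
      linarith
    set μ := (1 - t) / (Real.exp ε - t) with hμ_def
    have hμ0 : 0 ≤ μ := div_nonneg (by linarith) hden.le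
    have hμ1 : μ ≤ 1 := (div_le_one hden).2 (by
      have := Real.one_le_exp hε; linarith)
    have hμden : μ * (Real.exp ε - t) = 1 - t := div_mul_cancel₀ _ hden.ne'
    refine ⟨fun r => b r + μ * (hi r - b r), fun r => ⟨?_, ?_⟩, ?_, ?_⟩
    · show lo r ≤ b r + μ * (hi r - b r)
      nlinarith [hblo r, hbhi r]
    · show b r + μ * (hi r - b r) ≤ hi r
      nlinarith [hbhi r]
    · rw [Finset.sum_add_distrib, ← Finset.mul_sum, Finset.sum_sub_distrib, hsum_hi]
      rw [← ht_def] at *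
      linarith [hμden]
    · have step : ∀ r, |p r - (b r + μ * (hi r - b r))| ≤ |p r - b r| + μ * (hi r - b r) := by
        intro r
        have h0 : 0 ≤ μ * (hi r - b r) := mul_nonneg hμ0 (by linarith [hbhi r])
        calc |p r - (b r + μ * (hi r - b r))|
            = |(p r - b r) + (-(μ * (hi r - b r)))| := by ring_nf
          _ ≤ |p r - b r| + |(-(μ * (hi r - b r)))| := abs_add_le _ _
          _ = |p r - b r| + μ * (hi r - b r) := by rw [abs_neg, abs_of_nonneg h0]
      calc ∑ r, |p r - (b r + μ * (hi r - b r))|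
          ≤ ∑ r, (|p r - b r| + μ * (hi r - b r)) := Finset.sum_le_sum fun r _ => step r
        _ = (A + B) + μ * (Real.exp ε - t) := by
            rw [Finset.sum_add_distrib, hABsum, ← Finset.mul_sum, Finset.sum_sub_distrib,
              hsum_hi, ← ht_def]
        _ = (A + B) + (1 - t) := by rw [hμden]
        _ ≤ 2 * δ := by linarith
  · -- t = 1 : take b itself
    refine ⟨b, fun r => ⟨hblo r, hbhi r⟩, by rw [← ht_def, ht], ?_⟩
    rw [hABsum]
    linarith
  · -- t > 1 : mix b with lo
    have hden : 0 < t - Real.exp (-ε) := by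
      have : Real.exp (-ε) ≤ 1 := Real.exp_le_one_iff.2 (by linarith)
      linarith
    set μ := (t - 1) / (t - Real.exp (-ε)) with hμ_def
    have hμ0 : 0 ≤ μ := div_nonneg (by linarith) hden.le
    have hle1 : Real.exp (-ε) ≤ 1 := Real.exp_le_one_iff.2 (by linarith)
    have hμ1 : μ ≤ 1 := (div_le_one hden).2 (by linarith)
    have hμden : μ * (t - Real.exp (-ε)) = t - 1 := div_mul_cancel₀ _ hden.ne'
    refine ⟨fun r => b r - μ * (b r - lo r), fun r => ⟨?_, ?_⟩, ?_, ?_⟩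
    · show lo r ≤ b r - μ * (b r - lo r)
      nlinarith [hblo r]
    · show b r - μ * (b r - lo r) ≤ hi r
      nlinarith [hblo r, hbhi r]
    · rw [Finset.sum_sub_distrib, ← Finset.mul_sum, Finset.sum_sub_distrib, hsum_lo]
      rw [← ht_def] at *
      linarith [hμden]
    · have step : ∀ r, |p r - (b r - μ * (b r - lo r))| ≤ |p r - b r| + μ * (b r - lo r) := by
        intro r
        have h0 : 0 ≤ μ * (b r - lo r) := mul_nonneg hμ0 (by linarith [hblo r])
        calc |p r - (b r - μ * (b r - lo r))|
            = |(p r - b r) + μ * (b r - lo r)| := by ring_nf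
          _ ≤ |p r - b r| + |μ * (b r - lo r)| := abs_add_le _ _
          _ = |p r - b r| + μ * (b r - lo r) := by rw [abs_of_nonneg h0]
      calc ∑ r, |p r - (b r - μ * (b r - lo r))|
          ≤ ∑ r, (|p r - b r| + μ * (b r - lo r)) := Finset.sum_le_sum fun r _ => step r
        _ = (A + B) + μ * (t - Real.exp (-ε)) := by
            rw [Finset.sum_add_distrib, hABsum, ← Finset.mul_sum, Finset.sum_sub_distrib,
              hsum_lo, ← ht_def]
        _ = (A + B) + (t - 1) := by rw [hμden]
        _ ≤ 2 * δ := by linarith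

/-- Every `(ε,δ)`-DP single-input algorithm `M` is `δ`-close in total variation,
pointwise in the input, to some `(2ε,0)`-DP algorithm `M'`. -/
theorem stmt_8 {X R : Type*} [Fintype X] [Fintype R]
    (M : X → R → ℝ) (hM : ∀ x, IsDist (M x))
    (ε δ : ℝ) (hε : 0 ≤ ε) (hδ0 : 0 ≤ δ) (hδ1 : δ ≤ 1)
    (hDP : IsDP M ε δ) :
    ∃ M' : X → R → ℝ, (∀ x, IsDist (M' x)) ∧ IsDP M' (2 * ε) 0 ∧
      ∀ x, dTV (M x) (M' x) ≤ δ := by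
  by_cases hX : Nonempty X
  · obtain ⟨x₀⟩ := hX
    choose M' hbd hsum hclose using fun x =>
      aux_clamp ε δ hε hδ0 (M x) (M x₀) (hM x) (hM x₀)
        (fun C => hDP x x₀ C) (fun C => hDP x₀ x C)
    refine ⟨M', fun x => ⟨fun r =>
      le_trans (mul_nonneg (Real.exp_nonneg _) ((hM x₀).1 r)) ((hbd x r).1),
      hsum x⟩, ?_, fun x => ?_⟩
    · intro x x' C
      have h1 : ∑ r ∈ C, M' x r ≤ Real.exp ε * ∑ r ∈ C, M x₀ r := by
        rw [Finset.mul_sum]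
        exact Finset.sum_le_sum fun r _ => (hbd x r).2
      have h2 : Real.exp (-ε) * ∑ r ∈ C, M x₀ r ≤ ∑ r ∈ C, M' x' r := by
        rw [Finset.mul_sum]
        exact Finset.sum_le_sum fun r _ => (hbd x' r).1
      have key : Real.exp (2 * ε) * (Real.exp (-ε) * ∑ r ∈ C, M x₀ r)
          = Real.exp ε * ∑ r ∈ C, M x₀ r := by
        rw [← mul_assoc, ← Real.exp_add, show 2 * ε + -ε = ε from by ring]
      have h3 : Real.exp (2 * ε) * (Real.exp (-ε) * ∑ r ∈ C, M x₀ r)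
          ≤ Real.exp (2 * ε) * ∑ r ∈ C, M' x' r :=
        mul_le_mul_of_nonneg_left h2 (Real.exp_nonneg _)
      rw [key] at h3
      linarith
    · have := hclose x
      unfold dTV
      linarith
  · exact ⟨M, hM, fun x x' C => (hX ⟨x⟩).elim, fun x => (hX ⟨x⟩).elim⟩
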